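/- arXiv:0806.0093 — 3 statements merged into one kernel-verified Lean document; each statement's English description precedes it below -/
import Mathlib

section
/- For every integer n ≥ 1 and every real h with 0 ≤ h ≤ l_n, the infimum of Γ^0_{nm}(h) over integers m ≥ 1 is attained, and it equals the minimum of Γ^0_{nm}(h) over integers m with A_n(h) ≤ m ≤ B_n(h). -/
/-!
Past `n`, `Γ⁰_{nm}(h)` is at least `e^h ∑_{k=n}^{m-1} e^{-l_k}`, and any `m > n` with
`Γ⁰_{nm}(h) ≤ c` has `l_m ≤ h + c`. So each member of the sublevel set
`{m > n | Γ⁰_{nm}(h) ≤ c}` adds at least `e^{-h-c}` to that sum for every later member, which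
bounds the number of its members by `c e^c`; with `c = Γ⁰_{nn}(h)` the infimum is a minimum over
finitely many indices. An index `k` with `l_k ≤ h` lying between `n` and `m` beats `m`, because
`Γ⁰_{nk}(h)` is the same exponential sum over a shorter range; this moves a minimiser into
`[A_n(h), B_n(h)]`.
-/

/-- The function `Γ⁰_{nm}(h)` associated to the sequence `{l_n}`. -/
noncomputable def Gamma0F (l : ℕ → ℝ) (n m : ℕ) (h : ℝ) : ℝ :=
  if m < n then
    (if l m ≤ h then
      Real.exp h * ∑ k ∈ Finset.Icc (m + 1) n, Real.exp (-l k)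
    else
      l m - h + Real.exp h * ∑ k ∈ Finset.Icc m n, Real.exp (-l k))
  else if m = n then min h (l n - h)
  else
    (if l m ≤ h then
      Real.exp h * ∑ k ∈ Finset.Icc n (m - 1), Real.exp (-l k)
    else
      l m - h + Real.exp h * ∑ k ∈ Finset.Icc n m, Real.exp (-l k))

/-- `A_n(h)`: the largest positive integer `m < n` with `l_m ≤ h`, or `1` if there is none. -/
noncomputable def AFun (l : ℕ → ℝ) (n : ℕ) (h : ℝ) : ℕ :=
  sSup ({1} ∪ {m : ℕ | 1 ≤ m ∧ m < n ∧ l m ≤ h})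

/-- `B_n(h)`: the smallest integer `m > n` with `l_m ≤ h`, or `∞` if there is none. -/
noncomputable def BFun (l : ℕ → ℝ) (n : ℕ) (h : ℝ) : ℕ∞ :=
  sInf {x : ℕ∞ | ∃ m : ℕ, x = (m : ℕ∞) ∧ n < m ∧ l m ≤ h}

/-- `inf_{m ≥ 1} Γ⁰_{nm}(h)`. -/
noncomputable def infGamma0F (l : ℕ → ℝ) (n : ℕ) (h : ℝ) : ℝ :=
  sInf {x : ℝ | ∃ m : ℕ, 1 ≤ m ∧ x = Gamma0F l n m h}

/-- The set whose supremum is `K⁰ = sup_{n ≥ 1} sup_{h ∈ [0, l_n]} inf_{m ≥ 1} Γ⁰_{nm}(h)`. -/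
def K0SetF (l : ℕ → ℝ) : Set ℝ :=
  {x : ℝ | ∃ n : ℕ, 1 ≤ n ∧ ∃ h : ℝ, 0 ≤ h ∧ h ≤ l n ∧ x = infGamma0F l n h}

open Finset Real

theorem Nat.finite_of_forall_card_le_of_subset_Iio {S : Set ℕ} (N : ℕ)
    (hS : ∀ m ∈ S, ∀ T : Finset ℕ, (T : Set ℕ) ⊆ S ∩ Set.Iio m → T.card ≤ N) : S.Finite := by
  by_contra hinf
  obtain ⟨T, hTS, hcard⟩ := Set.Infinite.exists_subset_card_eq hinf (N + 2)
  have hT : T.Nonempty := Finset.card_pos.mp (by omega)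
  have hbelow : ((T.erase (T.max' hT) : Finset ℕ) : Set ℕ) ⊆ S ∩ Set.Iio (T.max' hT) := by
    intro k hk
    have hkT := Finset.mem_of_mem_erase hk
    exact ⟨hTS hkT, (T.le_max' k hkT).lt_of_ne (Finset.ne_of_mem_erase hk)⟩
  have hle := hS _ (hTS (T.max'_mem hT)) _ hbelow
  rw [Finset.card_erase_of_mem (T.max'_mem hT), hcard] at hle
  omega

theorem exists_forall_le_of_finite_sublevel {α β : Type*} [LinearOrder β] {f : α → β}
    {P : α → Prop} {a : α} (ha : P a) (hfin : {x | P x ∧ f x ≤ f a}.Finite) :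
    ∃ x, P x ∧ ∀ y, P y → f x ≤ f y := by
  obtain ⟨x, ⟨hPx, hxa⟩, hmin⟩ := Set.exists_min_image _ f hfin ⟨a, ha, le_rfl⟩
  refine ⟨x, hPx, fun y hPy => ?_⟩
  rcases le_or_gt (f y) (f a) with hya | hay
  · exact hmin y ⟨hPy, hya⟩
  · exact hxa.trans hay.le

section Gamma0F

variable {l : ℕ → ℝ} {n m k : ℕ} {h c : ℝ}

theorem Gamma0F_self : Gamma0F l n n h = min h (l n - h) := by
  simp [Gamma0F]

theorem Gamma0F_of_lt_of_le (hm : m < n) (hlm : l m ≤ h) :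
    Gamma0F l n m h = exp h * ∑ k ∈ Icc (m + 1) n, exp (-l k) := by
  simp [Gamma0F, hm, hlm]

theorem Gamma0F_of_gt_of_le (hm : n < m) (hlm : l m ≤ h) :
    Gamma0F l n m h = exp h * ∑ k ∈ Icc n (m - 1), exp (-l k) := by
  simp [Gamma0F, hm.not_gt, hm.ne', hlm]

theorem le_Gamma0F_of_lt (hm : m < n) :
    exp h * ∑ k ∈ Icc (m + 1) n, exp (-l k) ≤ Gamma0F l n m h := by
  by_cases hlm : l m ≤ h
  · exact (Gamma0F_of_lt_of_le hm hlm).ge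
  · have hsum : exp h * ∑ k ∈ Icc (m + 1) n, exp (-l k) ≤
        exp h * ∑ k ∈ Icc m n, exp (-l k) := by
      gcongr
      omega
    simp only [Gamma0F, if_pos hm, if_neg hlm]
    linarith

theorem le_Gamma0F_of_gt (hm : n < m) :
    exp h * ∑ k ∈ Icc n (m - 1), exp (-l k) ≤ Gamma0F l n m h := by
  by_cases hlm : l m ≤ h
  · exact (Gamma0F_of_gt_of_le hm hlm).ge
  · have hsum : exp h * ∑ k ∈ Icc n (m - 1), exp (-l k) ≤
        exp h * ∑ k ∈ Icc n m, exp (-l k) := by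
      gcongr
      omega
    simp only [Gamma0F, if_neg hm.not_gt, if_neg hm.ne', if_neg hlm]
    linarith

theorem le_add_of_Gamma0F_le (hm : n < m) (hc : 0 ≤ c) (hΓ : Gamma0F l n m h ≤ c) :
    l m ≤ h + c := by
  by_cases hlm : l m ≤ h
  · linarith
  · simp only [Gamma0F, if_neg hm.not_gt, if_neg hm.ne', if_neg hlm] at hΓ
    have : 0 ≤ exp h * ∑ k ∈ Icc n m, exp (-l k) := by positivity
    linarith

theorem Gamma0F_le_of_le_of_lt (hmk : m ≤ k) (hk : k < n) (hlk : l k ≤ h) :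
    Gamma0F l n k h ≤ Gamma0F l n m h := by
  rw [Gamma0F_of_lt_of_le hk hlk]
  refine le_trans ?_ (le_Gamma0F_of_lt (hmk.trans_lt hk))
  gcongr

theorem Gamma0F_le_of_lt_of_le (hk : n < k) (hkm : k ≤ m) (hlk : l k ≤ h) :
    Gamma0F l n k h ≤ Gamma0F l n m h := by
  rw [Gamma0F_of_gt_of_le hk hlk]
  refine le_trans ?_ (le_Gamma0F_of_gt (hk.trans_le hkm))
  gcongr

variable (l n h) in
theorem finite_setOf_Gamma0F_le (hc : 0 ≤ c) : {m | n < m ∧ Gamma0F l n m h ≤ c}.Finite := by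
  refine Nat.finite_of_forall_card_le_of_subset_Iio ⌈c * exp c⌉₊ fun m hm T hT => ?_
  have hTm : T ⊆ Icc n (m - 1) := fun k hk => by
    obtain ⟨⟨hnk, -⟩, hkm⟩ := hT hk
    simp only [Set.mem_Iio] at hkm
    exact mem_Icc.mpr ⟨hnk.le, by omega⟩
  have hcard : (T.card : ℝ) * exp (-c) ≤ c :=
    calc (T.card : ℝ) * exp (-c) = exp h * ∑ _k ∈ T, exp (-(h + c)) := by
          rw [sum_const, nsmul_eq_mul, mul_left_comm, ← exp_add]
          ring_nf
      _ ≤ exp h * ∑ k ∈ T, exp (-l k) := by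
          gcongr with k hk
          obtain ⟨⟨hnk, hk⟩, -⟩ := hT hk
          exact le_add_of_Gamma0F_le hnk hc hk
      _ ≤ exp h * ∑ k ∈ Icc n (m - 1), exp (-l k) := by gcongr
      _ ≤ c := (le_Gamma0F_of_gt hm.1).trans hm.2
  have : (T.card : ℝ) ≤ c * exp c := by
    rwa [exp_neg, ← div_eq_mul_inv, div_le_iff₀ (exp_pos c)] at hcard
  exact_mod_cast this.trans (Nat.le_ceil _)

theorem exists_forall_Gamma0F_le (hn : 1 ≤ n) (h0 : 0 ≤ h) (hln : h ≤ l n) :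
    ∃ m₁, 1 ≤ m₁ ∧ ∀ m, 1 ≤ m → Gamma0F l n m₁ h ≤ Gamma0F l n m h := by
  refine exists_forall_le_of_finite_sublevel (f := (Gamma0F l n · h)) (P := (1 ≤ ·)) hn ?_
  have hc : 0 ≤ Gamma0F l n n h := by
    rw [Gamma0F_self]
    exact le_min h0 (sub_nonneg.mpr hln)
  refine ((Set.finite_Icc 1 n).union (finite_setOf_Gamma0F_le l n h hc)).subset ?_
  rintro m ⟨hm1, hm⟩
  rcases le_or_gt m n with hmn | hmn
  · exact Or.inl ⟨hm1, hmn⟩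
  · exact Or.inr ⟨hmn, hm⟩

end Gamma0F

section AB

variable (l : ℕ → ℝ) (n : ℕ) (h : ℝ)

theorem AFun_eq_one_or :
    AFun l n h = 1 ∨ (1 ≤ AFun l n h ∧ AFun l n h < n ∧ l (AFun l n h) ≤ h) := by
  have hbdd : BddAbove ({1} ∪ {m : ℕ | 1 ≤ m ∧ m < n ∧ l m ≤ h}) := by
    refine ⟨n + 1, ?_⟩
    rintro m (hm | hm)
    · simp only [Set.mem_singleton_iff] at hm
      omega
    · exact hm.2.1.le.trans n.le_succ
  exact Nat.sSup_mem (Set.union_nonempty.mpr (Or.inl (Set.singleton_nonempty 1))) hbdd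

theorem AFun_le (hn : 1 ≤ n) : AFun l n h ≤ n := by
  rcases AFun_eq_one_or l n h with hA | hA <;> omega

theorem BFun_eq_top_or :
    BFun l n h = ⊤ ∨ ∃ b : ℕ, BFun l n h = b ∧ n < b ∧ l b ≤ h := by
  rcases {x : ℕ∞ | ∃ m : ℕ, x = m ∧ n < m ∧ l m ≤ h}.eq_empty_or_nonempty with hB | hB
  · left
    rw [BFun, hB]
    exact sInf_empty
  · exact Or.inr (csInf_mem hB)

theorem lt_BFun : (n : ℕ∞) < BFun l n h := by
  rcases BFun_eq_top_or l n h with hB | ⟨b, hB, hnb, -⟩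
  · rw [hB]
    exact ENat.natCast_lt_top n
  · rw [hB]
    exact_mod_cast hnb

end AB

theorem stmt3_general (l : ℕ → ℝ)
    (n : ℕ) (hn : 1 ≤ n) (h : ℝ) (h0 : 0 ≤ h) (hln : h ≤ l n) :
    ∃ m₀ : ℕ, 1 ≤ m₀ ∧ AFun l n h ≤ m₀ ∧ (m₀ : ℕ∞) ≤ BFun l n h ∧
      ∀ m : ℕ, 1 ≤ m → Gamma0F l n m₀ h ≤ Gamma0F l n m h := by
  obtain ⟨m₁, hm₁, hmin⟩ := exists_forall_Gamma0F_le hn h0 hln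
  rcases lt_or_ge m₁ (AFun l n h) with hA | hA
  · obtain ⟨hA1, hAn, hlA⟩ := (AFun_eq_one_or l n h).resolve_left (by omega)
    refine ⟨AFun l n h, hA1, le_rfl, ?_, fun m hm => ?_⟩
    · exact (Nat.cast_le.mpr hAn.le).trans (lt_BFun l n h).le
    · exact (Gamma0F_le_of_le_of_lt hA.le hAn hlA).trans (hmin m hm)
  rcases le_or_gt (m₁ : ℕ∞) (BFun l n h) with hB | hB
  · exact ⟨m₁, hm₁, hA, hB, hmin⟩
  obtain ⟨b, hb, hnb, hlb⟩ := (BFun_eq_top_or l n h).resolve_left hB.ne_top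
  rw [hb, Nat.cast_lt] at hB
  refine ⟨b, by omega, (AFun_le l n h hn).trans hnb.le, hb.ge, fun m hm => ?_⟩
  exact (Gamma0F_le_of_lt_of_le hnb hB.le hlb).trans (hmin m hm)

/-- For every integer `n ≥ 1` and every real `h` with `0 ≤ h ≤ l_n`, the infimum of
`Γ⁰_{nm}(h)` over integers `m ≥ 1` is attained, and it equals the minimum of `Γ⁰_{nm}(h)`
over integers `m` with `A_n(h) ≤ m ≤ B_n(h)`. -/
theorem stmt3 (l : ℕ → ℝ) (hl : ∀ n : ℕ, 1 ≤ n → 0 < l n)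
    (n : ℕ) (hn : 1 ≤ n) (h : ℝ) (h0 : 0 ≤ h) (hln : h ≤ l n) :
    ∃ m₀ : ℕ, 1 ≤ m₀ ∧ AFun l n h ≤ m₀ ∧ (m₀ : ℕ∞) ≤ BFun l n h ∧
      ∀ m : ℕ, 1 ≤ m → Gamma0F l n m₀ h ≤ Gamma0F l n m h :=
  stmt3_general l n hn h h0 hln
end

section
/- For each l₀ > 0 there exist constants c, C > 0, depending only on l₀, such that for all reals x, y, t, h ≥ 0 with y ≥ h ≥ x and y ≥ l₀, setting F(x, y, t, h) := arsinh((cosh x · cosh(y - h) + cosh t · cosh h)/sinh y), one has c · (e^{x - h} + e^{-(y - h - t)_+} + (t + h - y)_+) ≤ F(x, y, t, h) ≤ C · (e^{x - h} + e^{-(y - h - t)_+} + (t + h - y)_+). -/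
/-!
Writing `b = e^{x-h} + e^{t+h-y}`, each product `cosh u · cosh v` with `u, v ≥ 0` lies between
`e^{u+v}/4` and `e^{u+v}`, so the numerator of `F` is comparable to `b e^y`; for `y ≥ l₀` the
denominator `sinh y` is comparable to `e^y`. Hence `F` is squeezed between `arsinh (b/2)` and
`arsinh (b/k)` with `k = (1 - e^{-2 l₀})/2`. Finally `arsinh u` is linear in `u` for bounded `u`
and behaves like `log u` for large `u`: with `s = t + h - y`, the weight
`e^{x-h} + e^{min(s,0)} + s₊` equals `b` when `s ≤ 0` and is comparable to `1 + s ≈ log b`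
when `s > 0`.
-/

/-- For a real number `x`, its positive part `x₊ = max {x, 0}`. -/
noncomputable def ppart (x : ℝ) : ℝ := max x 0

/-- The function `F(x, y, t, h) := arsinh((cosh x · cosh(y - h) + cosh t · cosh h)/sinh y)`. -/
noncomputable def Ffun (x y t h : ℝ) : ℝ :=
  Real.arsinh ((Real.cosh x * Real.cosh (y - h) + Real.cosh t * Real.cosh h) / Real.sinh y)

open Real

namespace Real

lemma log_one_add_le_arsinh {u : ℝ} (hu : 0 ≤ u) : log (1 + u) ≤ arsinh u := by
  have : 1 ≤ √(1 + u ^ 2) := one_le_sqrt.mpr (by nlinarith)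
  exact log_le_log (by linarith) (by linarith)

lemma arsinh_le_log_one_add_two_mul {u : ℝ} (hu : 0 ≤ u) : arsinh u ≤ log (1 + 2 * u) := by
  have h1 : √(1 + u ^ 2) ≤ 1 + u := (sqrt_le_left (by linarith)).mpr (by nlinarith)
  have h0 : 0 < u + √(1 + u ^ 2) := by positivity
  exact log_le_log h0 (by linarith)

lemma exp_add_div_four_le_cosh_mul_cosh (u v : ℝ) : exp (u + v) / 4 ≤ cosh u * cosh v := by
  have hu : exp u / 2 ≤ cosh u := by rw [cosh_eq]; linarith [exp_pos (-u)]
  have hv : exp v / 2 ≤ cosh v := by rw [cosh_eq]; linarith [exp_pos (-v)]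
  calc exp (u + v) / 4 = (exp u / 2) * (exp v / 2) := by rw [exp_add]; ring
    _ ≤ cosh u * cosh v := mul_le_mul hu hv (by positivity) (cosh_pos u).le

lemma cosh_mul_cosh_le_exp_add {u v : ℝ} (hu : 0 ≤ u) (hv : 0 ≤ v) :
    cosh u * cosh v ≤ exp (u + v) := by
  have cosh_le_exp : ∀ w : ℝ, 0 ≤ w → cosh w ≤ exp w := fun w hw => by
    rw [cosh_eq]; linarith [exp_le_exp.mpr (show -w ≤ w by linarith)]
  rw [exp_add]
  exact mul_le_mul (cosh_le_exp u hu) (cosh_le_exp v hv) (cosh_pos v).le (exp_pos u).le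

lemma sinh_le_exp_div_two (y : ℝ) : sinh y ≤ exp y / 2 := by
  rw [sinh_eq]; linarith [exp_pos (-y)]

lemma mul_exp_le_sinh {l y : ℝ} (hly : l ≤ y) : (1 - exp (-(2 * l))) / 2 * exp y ≤ sinh y := by
  have h : exp (-(2 * y)) ≤ exp (-(2 * l)) := exp_le_exp.mpr (by linarith)
  have hy : exp (-y) = exp y * exp (-(2 * y)) := by rw [← exp_add]; ring_nf
  rw [sinh_eq, hy]
  nlinarith [exp_pos y]

end Real

section Comparison

variable {a s : ℝ}

lemma le_arsinh_half_add_exp (ha : 0 ≤ a) (ha1 : a ≤ 1) :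
    (a + exp (-ppart (-s)) + ppart s) / 12 ≤ arsinh ((a + exp s) / 2) := by
  refine le_trans ?_ (log_one_add_le_arsinh (by positivity))
  rcases le_or_gt s 0 with hs | hs
  · have hb : a + exp s ≤ 2 := by linarith [exp_le_one_iff.mpr hs]
    have hlog := le_log_one_add_of_nonneg (show 0 ≤ (a + exp s) / 2 by positivity)
    rw [show ppart (-s) = -s from max_eq_left (by linarith), show ppart s = 0 from max_eq_right hs,
      neg_neg, add_zero]
    refine le_trans ?_ hlog
    rw [le_div_iff₀ (by positivity)]
    nlinarith [exp_pos s]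
  · have hes : 1 ≤ exp s := one_le_exp hs.le
    rw [show ppart (-s) = 0 from max_eq_right (by linarith), show ppart s = s from max_eq_left hs.le,
      neg_zero, exp_zero]
    rcases le_or_gt s 2 with hs2 | hs2
    · have h32 : log (3 / 2) ≤ log (1 + (a + exp s) / 2) := log_le_log (by norm_num) (by linarith)
      have hlog := le_log_one_add_of_nonneg (show (0 : ℝ) ≤ 1 / 2 by norm_num)
      norm_num at hlog
      linarith
    · have hexp : log (exp s / 2) ≤ log (1 + (a + exp s) / 2) :=
        log_le_log (by positivity) (by linarith)
      rw [log_div (exp_ne_zero s) two_ne_zero, log_exp] at hexp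
      have hlog2 : log 2 ≤ 1 := by linarith [log_le_sub_one_of_pos (show (0 : ℝ) < 2 by norm_num)]
      linarith

lemma arsinh_add_exp_div_le {k : ℝ} (ha : 0 ≤ a) (ha1 : a ≤ 1) (hk : 0 < k) :
    arsinh ((a + exp s) / k) ≤ (1 + 4 / k) * (a + exp (-ppart (-s)) + ppart s) := by
  refine le_trans (arsinh_le_log_one_add_two_mul (by positivity)) ?_
  rcases le_or_gt s 0 with hs | hs
  · rw [show ppart (-s) = -s from max_eq_left (by linarith), show ppart s = 0 from max_eq_right hs,
      neg_neg, add_zero]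
    calc log (1 + 2 * ((a + exp s) / k)) ≤ 2 * ((a + exp s) / k) := by
          linarith [log_le_sub_one_of_pos (show 0 < 1 + 2 * ((a + exp s) / k) by positivity)]
      _ ≤ (1 + 4 / k) * (a + exp s) := by
          have : 0 < 2 / k := by positivity
          rw [show 2 * ((a + exp s) / k) = 2 / k * (a + exp s) by ring,
            show 4 / k = 2 * (2 / k) by ring]
          nlinarith [exp_pos s]
  · have hes : 1 ≤ exp s := one_le_exp hs.le
    rw [show ppart (-s) = 0 from max_eq_right (by linarith), show ppart s = s from max_eq_left hs.le,
      neg_zero, exp_zero]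
    have hk4 : 0 < 1 + 4 / k := by positivity
    calc log (1 + 2 * ((a + exp s) / k)) ≤ log ((1 + 4 / k) * exp s) := by
          refine log_le_log (by positivity) ?_
          rw [show 2 * ((a + exp s) / k) = (2 * a + 2 * exp s) / k by ring,
            show (1 + 4 / k) * exp s = exp s + 4 * exp s / k by ring]
          gcongr; linarith
      _ = log (1 + 4 / k) + s := by rw [log_mul hk4.ne' (exp_ne_zero s), log_exp]
      _ ≤ 4 / k + s := by linarith [log_le_sub_one_of_pos hk4]
      _ ≤ (1 + 4 / k) * (a + 1 + s) := by nlinarith [show 0 < 4 / k by positivity]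

end Comparison

section Bounds

variable {x y t h : ℝ}

lemma arsinh_half_le_Ffun (hy : 0 < y) :
    arsinh ((exp (x - h) + exp (t + h - y)) / 2) ≤ Ffun x y t h := by
  refine arsinh_le_arsinh.mpr ?_
  have hsy : 0 < sinh y := sinh_pos_iff.mpr hy
  have hnum : (exp (x - h) + exp (t + h - y)) * exp y / 4 ≤
      cosh x * cosh (y - h) + cosh t * cosh h := by
    have h1 := exp_add_div_four_le_cosh_mul_cosh x (y - h)
    have h2 := exp_add_div_four_le_cosh_mul_cosh t h
    rw [add_mul, ← exp_add, ← exp_add]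
    ring_nf at h1 h2 ⊢
    linarith
  rw [le_div_iff₀ hsy]
  nlinarith [sinh_le_exp_div_two y, exp_pos (x - h), exp_pos (t + h - y)]

lemma Ffun_le_arsinh {k : ℝ} (hk : 0 < k) (hky : k * exp y ≤ sinh y) (hx : 0 ≤ x) (ht : 0 ≤ t)
    (hh : 0 ≤ h) (hhy : h ≤ y) :
    Ffun x y t h ≤ arsinh ((exp (x - h) + exp (t + h - y)) / k) := by
  refine arsinh_le_arsinh.mpr ?_
  have hsy : 0 < sinh y := lt_of_lt_of_le (by positivity) hky
  have hnum : cosh x * cosh (y - h) + cosh t * cosh h ≤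
      (exp (x - h) + exp (t + h - y)) * exp y := by
    have h1 := cosh_mul_cosh_le_exp_add hx (sub_nonneg.mpr hhy)
    have h2 := cosh_mul_cosh_le_exp_add ht hh
    rw [add_mul, ← exp_add, ← exp_add]
    ring_nf at h1 h2 ⊢
    linarith
  rw [div_le_div_iff₀ hsy hk]
  nlinarith [exp_pos (x - h), exp_pos (t + h - y)]

end Bounds

/-- For each `l₀ > 0` there exist constants `c, C > 0`, depending only on `l₀`, such that for
all reals `x, y, t, h ≥ 0` with `y ≥ h ≥ x` and `y ≥ l₀`,
`c (e^{x-h} + e^{-(y-h-t)₊} + (t+h-y)₊) ≤ F(x,y,t,h) ≤ C (e^{x-h} + e^{-(y-h-t)₊} + (t+h-y)₊)`. -/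
theorem stmt10 (l₀ : ℝ) (hl₀ : 0 < l₀) :
    ∃ c C : ℝ, 0 < c ∧ 0 < C ∧
      ∀ x y t h : ℝ, 0 ≤ x → 0 ≤ y → 0 ≤ t → 0 ≤ h → x ≤ h → h ≤ y → l₀ ≤ y →
        c * (Real.exp (x - h) + Real.exp (-(ppart (y - h - t))) + ppart (t + h - y)) ≤
            Ffun x y t h ∧
          Ffun x y t h ≤
            C * (Real.exp (x - h) + Real.exp (-(ppart (y - h - t))) + ppart (t + h - y)) := by
  have hk : 0 < (1 - exp (-(2 * l₀))) / 2 := by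
    have : exp (-(2 * l₀)) < 1 := exp_lt_one_iff.mpr (by linarith)
    linarith
  set k := (1 - exp (-(2 * l₀))) / 2
  refine ⟨1 / 12, 1 + 4 / k, by norm_num, by positivity, ?_⟩
  intro x y t h hx _ ht hh hxh hhy hly
  have ha : exp (x - h) ≤ 1 := exp_le_one_iff.mpr (by linarith)
  rw [show y - h - t = -(t + h - y) by ring]
  constructor
  · calc _ = (exp (x - h) + exp (-ppart (-(t + h - y))) + ppart (t + h - y)) / 12 := by ring
      _ ≤ _ := le_arsinh_half_add_exp (exp_pos _).le ha
      _ ≤ _ := arsinh_half_le_Ffun (by linarith)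
  · exact (Ffun_le_arsinh hk (mul_exp_le_sinh hly) hx ht hh hhy).trans
      (arsinh_add_exp_div_le (exp_pos _).le ha hk)
end

section
/- Suppose l_m ≤ l_n + c₁ for all positive integers m ≤ n (for some constant c₁ ≥ 0), and suppose K := sup_{n ≥ 1} sup_{h ∈ [0, l_n]} inf_{m ≥ 1} Γ_{nm}(h) is finite. Then for every positive integer n with l_{n+1} > 4(K + c₁), one has r_n ≤ 2·max{K, 1} + 2·log max{K, 1} + 3c₁. -/
/-- `Δ(k) = e^{-l_k} + e^{-l_{k+1}} + e^{-(1/2)(l_k + l_{k+1} - r_k)₊} + (r_k - l_k - l_{k+1})₊`. -/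
noncomputable def DeltaF (l r : ℕ → ℝ) (k : ℕ) : ℝ :=
  Real.exp (-l k) + Real.exp (-l (k + 1)) +
    Real.exp (-(1/2) * ppart (l k + l (k + 1) - r k)) + ppart (r k - l k - l (k + 1))

/-- The function `Γ_{nm}(h)` associated to the sequences `{l_n}` and `{r_n}`. -/
noncomputable def GammaF (l r : ℕ → ℝ) (n m : ℕ) (h : ℝ) : ℝ :=
  if m < n then
    (if l m ≤ h then
      ppart (r m + h - l (m + 1)) + Real.exp h * ∑ k ∈ Finset.Icc (m + 1) (n - 1), DeltaF l r k
    else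
      l m - h + Real.exp h * ∑ k ∈ Finset.Icc m (n - 1), DeltaF l r k)
  else if m = n then min h (l n - h)
  else
    (if l m ≤ h then
      ppart (r (m - 1) + h - l (m - 1)) + Real.exp h * ∑ k ∈ Finset.Icc n (m - 2), DeltaF l r k
    else
      l m - h + Real.exp h * ∑ k ∈ Finset.Icc n (m - 1), DeltaF l r k)

/-- `inf_{m ≥ 1} Γ_{nm}(h)`. -/
noncomputable def infGammaF (l r : ℕ → ℝ) (n : ℕ) (h : ℝ) : ℝ :=
  sInf {x : ℝ | ∃ m : ℕ, 1 ≤ m ∧ x = GammaF l r n m h}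

/-- The set whose supremum is `K = sup_{n ≥ 1} sup_{h ∈ [0, l_n]} inf_{m ≥ 1} Γ_{nm}(h)`. -/
def KSetF (l r : ℕ → ℝ) : Set ℝ :=
  {x : ℝ | ∃ n : ℕ, 1 ≤ n ∧ ∃ h : ℝ, 0 ≤ h ∧ h ≤ l n ∧ x = infGammaF l r n h}

/-!
Fix a small `t > 0` and take `h = l_{n+1} - c₁ - K - 2t`. Since `inf_m Γ_{n+1,m}(h) ≤ K`,
some `Γ_{n+1,m}(h)` is `< K + t`. The choice of `h` makes `m = n + 1` (where
`Γ = min (h, l_{n+1} - h)`) and, via `l_{n+1} ≤ l_m + c₁`, every `m > n + 1` impossible. For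
`m ≤ n` either `Γ ≥ r_n + h - l_{n+1}`, or `Γ ≥ e^h Δ(n) ≥ e^{h - (l_n + l_{n+1} - r_n)₊ / 2}`;
both bound `r_n`, and letting `t → 0` gives the claim.
-/

lemma ppart_nonneg (x : ℝ) : 0 ≤ ppart x := le_max_right x 0

lemma le_ppart (x : ℝ) : x ≤ ppart x := le_max_left x 0

lemma log_add_le_log_max_one_add {K t : ℝ} (hK : 0 ≤ K) (ht : 0 < t) :
    Real.log (K + t) ≤ Real.log (max K 1) + t := by
  have hM : 0 < max K 1 := lt_max_of_lt_right one_pos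
  -- `K + t ≤ max K 1 * (1 + t) ≤ max K 1 * e^t`
  have hle : K + t ≤ max K 1 * Real.exp t := by
    nlinarith [Real.add_one_le_exp t, le_max_left K 1, le_max_right K 1]
  calc Real.log (K + t) ≤ Real.log (max K 1 * Real.exp t) := Real.log_le_log (by linarith) hle
    _ = Real.log (max K 1) + t := by rw [Real.log_mul hM.ne' (Real.exp_pos t).ne', Real.log_exp]

section

variable {l r : ℕ → ℝ}

lemma deltaF_nonneg (k : ℕ) : 0 ≤ DeltaF l r k := by
  unfold DeltaF
  have := ppart_nonneg (r k - l k - l (k + 1))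
  positivity

lemma exp_le_deltaF (k : ℕ) :
    Real.exp (-(1 / 2) * ppart (l k + l (k + 1) - r k)) ≤ DeltaF l r k := by
  unfold DeltaF
  have := ppart_nonneg (r k - l k - l (k + 1))
  linarith [Real.exp_pos (-l k), Real.exp_pos (-l (k + 1))]

lemma exp_mul_sum_deltaF_nonneg (h : ℝ) (s : Finset ℕ) :
    0 ≤ Real.exp h * ∑ k ∈ s, DeltaF l r k :=
  mul_nonneg (Real.exp_pos h).le (Finset.sum_nonneg fun k _ => deltaF_nonneg k)

lemma gammaF_nonneg {n m : ℕ} {h : ℝ} (h0 : 0 ≤ h) (hl : h ≤ l n) : 0 ≤ GammaF l r n m h := by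
  unfold GammaF
  split_ifs with _ hlm _ hlm'
  · exact add_nonneg (ppart_nonneg _) (exp_mul_sum_deltaF_nonneg h _)
  · exact add_nonneg (by linarith [not_le.mp hlm]) (exp_mul_sum_deltaF_nonneg h _)
  · exact le_min h0 (by linarith)
  · exact add_nonneg (ppart_nonneg _) (exp_mul_sum_deltaF_nonneg h _)
  · exact add_nonneg (by linarith [not_le.mp hlm']) (exp_mul_sum_deltaF_nonneg h _)

lemma gammaF_self (n : ℕ) (h : ℝ) : GammaF l r n n h = min h (l n - h) := by
  simp [GammaF]

lemma gammaF_succ_self_of_le {n : ℕ} {h : ℝ} (hle : l n ≤ h) :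
    GammaF l r (n + 1) n h = ppart (r n + h - l (n + 1)) := by
  simp [GammaF, hle]

lemma exp_mul_deltaF_le_gammaF_succ {n m : ℕ} {h : ℝ} (hmn : m ≤ n)
    (hex : ¬(m = n ∧ l n ≤ h)) : Real.exp h * DeltaF l r n ≤ GammaF l r (n + 1) m h := by
  have hsum : ∀ a ≤ n,
      Real.exp h * DeltaF l r n ≤ Real.exp h * ∑ k ∈ Finset.Icc a n, DeltaF l r k :=
    fun a ha => mul_le_mul_of_nonneg_left
      (Finset.single_le_sum (fun k _ => deltaF_nonneg k) (Finset.mem_Icc.2 ⟨ha, le_rfl⟩))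
      (Real.exp_pos h).le
  simp only [GammaF, if_pos (Nat.lt_succ_of_le hmn), Nat.add_sub_cancel]
  split_ifs with hle
  · have hm : m + 1 ≤ n := by
      rcases hmn.lt_or_eq with hlt | rfl
      · exact hlt
      · exact absurd ⟨rfl, hle⟩ hex
    linarith [hsum (m + 1) hm, ppart_nonneg (r m + h - l (m + 1))]
  · linarith [hsum m hmn]

lemma sub_le_gammaF_of_lt {n m : ℕ} {h : ℝ} (hnm : n < m) (hlt : h < l m) :
    l m - h ≤ GammaF l r n m h := by
  simp only [GammaF, if_neg (not_lt.mpr hnm.le), if_neg hnm.ne', if_neg (not_le.mpr hlt)]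
  exact le_add_of_nonneg_right (exp_mul_sum_deltaF_nonneg h _)

lemma infGammaF_nonneg {n : ℕ} {h : ℝ} (h0 : 0 ≤ h) (hl : h ≤ l n) :
    0 ≤ infGammaF l r n h :=
  Real.sInf_nonneg fun _ ⟨_, _, hx⟩ => hx ▸ gammaF_nonneg h0 hl

lemma sSup_kSetF_nonneg : 0 ≤ sSup (KSetF l r) :=
  Real.sSup_nonneg fun _ ⟨_, _, _, h0, hl, hx⟩ => hx ▸ infGammaF_nonneg h0 hl

lemma infGammaF_le_sSup_kSetF (hbdd : BddAbove (KSetF l r)) {n : ℕ} (hn : 1 ≤ n) {h : ℝ}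
    (h0 : 0 ≤ h) (hl : h ≤ l n) : infGammaF l r n h ≤ sSup (KSetF l r) :=
  le_csSup hbdd ⟨n, hn, h, h0, hl, rfl⟩

lemma exists_gammaF_lt_of_infGammaF_lt {n : ℕ} {h a : ℝ} (hlt : infGammaF l r n h < a) :
    ∃ m, GammaF l r n m h < a := by
  obtain ⟨_, ⟨m, -, rfl⟩, hm⟩ :=
    exists_lt_of_csInf_lt (s := {x | ∃ m, 1 ≤ m ∧ x = GammaF l r n m h}) ⟨_, 1, le_rfl, rfl⟩ hlt
  exact ⟨m, hm⟩

lemma gammaF_succ_lt_cases {n m : ℕ} {c₁ h a : ℝ} (hc₁ : 0 ≤ c₁)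
    (hmono : ∀ m, n + 1 < m → l (n + 1) ≤ l m + c₁) (ha : 0 < a) (hah : a ≤ h)
    (hal : a ≤ l (n + 1) - c₁ - h) (hm : GammaF l r (n + 1) m h < a) :
    r n + h - l (n + 1) < a ∨ Real.exp h * DeltaF l r n < a := by
  rcases lt_trichotomy m (n + 1) with hlt | rfl | hgt
  · by_cases hex : m = n ∧ l n ≤ h
    · obtain ⟨rfl, hle⟩ := hex
      rw [gammaF_succ_self_of_le hle] at hm
      exact Or.inl ((le_ppart _).trans_lt hm)
    · exact Or.inr ((exp_mul_deltaF_le_gammaF_succ (Nat.lt_succ_iff.mp hlt) hex).trans_lt hm)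
  · rw [gammaF_self] at hm
    exact absurd hm (not_lt.mpr (le_min hah (by linarith)))
  · have hlm : h < l m := by linarith [hmono m hgt]
    linarith [sub_le_gammaF_of_lt (r := r) hgt hlm, hmono m hgt]

lemma r_lt_of_exp_mul_deltaF_lt {n : ℕ} {h a : ℝ} (ha : 0 < a) (hah : a ≤ h)
    (hlt : Real.exp h * DeltaF l r n < a) :
    r n < l n + l (n + 1) - 2 * h + 2 * Real.log a := by
  have hexp : Real.exp (h - 1 / 2 * ppart (l n + l (n + 1) - r n)) < a :=
    calc Real.exp (h - 1 / 2 * ppart (l n + l (n + 1) - r n))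
        = Real.exp h * Real.exp (-(1 / 2) * ppart (l n + l (n + 1) - r n)) := by
          rw [← Real.exp_add]; ring_nf
      _ ≤ Real.exp h * DeltaF l r n :=
          mul_le_mul_of_nonneg_left (exp_le_deltaF n) (Real.exp_pos h).le
      _ < a := hlt
  have hlog := (Real.lt_log_iff_exp_lt ha).mpr hexp
  -- `log a < a ≤ h` rules out the branch where the positive part vanishes
  rcases lt_max_iff.mp (show 2 * (h - Real.log a) < max (l n + l (n + 1) - r n) 0 by
    unfold ppart at hlog; linarith) with hpos | hzero
  · linarith
  · linarith [Real.log_le_sub_one_of_pos ha]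

variable {n : ℕ} {c₁ K : ℝ}

lemma r_le_add_of_forall_infGammaF_le (hc₁ : 0 ≤ c₁) (hmono_succ : l n ≤ l (n + 1) + c₁)
    (hmono : ∀ m, n + 1 < m → l (n + 1) ≤ l m + c₁) (hK : 0 ≤ K)
    (hinf : ∀ h, 0 ≤ h → h ≤ l (n + 1) → infGammaF l r (n + 1) h ≤ K) {t : ℝ} (ht : 0 < t)
    (htl : 2 * K + c₁ + 3 * t ≤ l (n + 1)) :
    r n ≤ 2 * K + 2 * Real.log (max K 1) + 3 * c₁ + 6 * t := by
  set h := l (n + 1) - c₁ - K - 2 * t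
  obtain ⟨m, hm⟩ : ∃ m, GammaF l r (n + 1) m h < K + t :=
    exists_gammaF_lt_of_infGammaF_lt ((hinf h (by linarith) (by linarith)).trans_lt (by linarith))
  have hlog := log_add_le_log_max_one_add hK ht
  have hlog_nonneg : 0 ≤ Real.log (max K 1) := Real.log_nonneg (le_max_right K 1)
  rcases gammaF_succ_lt_cases hc₁ hmono (by linarith) (by linarith) (by linarith) hm
    with hsmall | hexp
  · linarith
  · linarith [r_lt_of_exp_mul_deltaF_lt (by linarith) (by linarith) hexp]

lemma r_le_of_forall_infGammaF_le (hc₁ : 0 ≤ c₁) (hmono_succ : l n ≤ l (n + 1) + c₁)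
    (hmono : ∀ m, n + 1 < m → l (n + 1) ≤ l m + c₁) (hK : 0 ≤ K)
    (hinf : ∀ h, 0 ≤ h → h ≤ l (n + 1) → infGammaF l r (n + 1) h ≤ K)
    (hlK : 2 * K + c₁ < l (n + 1)) :
    r n ≤ 2 * max K 1 + 2 * Real.log (max K 1) + 3 * c₁ := by
  refine le_of_forall_pos_le_add fun ε hε => ?_
  have ht := min_le_left (ε / 6) ((l (n + 1) - 2 * K - c₁) / 3)
  have ht' := min_le_right (ε / 6) ((l (n + 1) - 2 * K - c₁) / 3)
  have hbound := r_le_add_of_forall_infGammaF_le hc₁ hmono_succ hmono hK hinf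
    (t := min (ε / 6) ((l (n + 1) - 2 * K - c₁) / 3)) (lt_min (by linarith) (by linarith))
    (by linarith)
  linarith [le_max_left K 1]

end

theorem stmt12_general (l r : ℕ → ℝ) (c₁ : ℝ) (hc₁ : 0 ≤ c₁)
    (hmono : ∀ m n : ℕ, 1 ≤ m → m ≤ n → l m ≤ l n + c₁)
    (hbdd : BddAbove (KSetF l r))
    (n : ℕ) (hn : 1 ≤ n) (hln : 4 * (sSup (KSetF l r) + c₁) < l (n + 1)) :
    r n ≤ 2 * max (sSup (KSetF l r)) 1 + 2 * Real.log (max (sSup (KSetF l r)) 1) + 3 * c₁ := by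
  have hK := sSup_kSetF_nonneg (l := l) (r := r)
  exact r_le_of_forall_infGammaF_le hc₁ (hmono n (n + 1) hn n.le_succ)
    (fun m hm => hmono (n + 1) m n.succ_pos hm.le) hK
    (fun h h0 hl => infGammaF_le_sSup_kSetF hbdd n.succ_pos h0 hl) (by linarith)

/-- Suppose `l_m ≤ l_n + c₁` for all positive integers `m ≤ n` (with `c₁ ≥ 0`), and suppose
`K := sup_{n ≥ 1} sup_{h ∈ [0, l_n]} inf_{m ≥ 1} Γ_{nm}(h)` is finite. Then for every
positive integer `n` with `l_{n+1} > 4(K + c₁)`, one has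
`r_n ≤ 2 max {K, 1} + 2 log (max {K, 1}) + 3 c₁`. -/
theorem stmt12 (l r : ℕ → ℝ) (hl : ∀ n : ℕ, 1 ≤ n → 0 < l n)
    (hr : ∀ n : ℕ, 1 ≤ n → 0 ≤ r n) (c₁ : ℝ) (hc₁ : 0 ≤ c₁)
    (hmono : ∀ m n : ℕ, 1 ≤ m → m ≤ n → l m ≤ l n + c₁)
    (hbdd : BddAbove (KSetF l r))
    (n : ℕ) (hn : 1 ≤ n) (hln : 4 * (sSup (KSetF l r) + c₁) < l (n + 1)) :
    r n ≤ 2 * max (sSup (KSetF l r)) 1 + 2 * Real.log (max (sSup (KSetF l r)) 1) + 3 * c₁ :=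
  stmt12_general l r c₁ hc₁ hmono hbdd n hn hln
end
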